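/- The M₄(A)-module M_p⁴, viewed over the subalgebra generated by the matrices x₀ ↦ diag(x₀,x₀,x₀,x₀), x₁ ↦ diag(x₁,-x₁,-x₁,x₁), x₂ ↦ the antidiagonal matrix with all antidiagonal entries x₂, and x₃ ↦ the antidiagonal matrix with entries (x₃,-x₃,-x₃,x₃) from top-right to bottom-left, decomposes as a direct sum of four cyclic graded submodules generated by (m₀,0,0,m₀), (m₀,0,0,-m₀), (0,m₀,m₀,0), (0,m₀,-m₀,0), which are isomorphic to the point modules M_p, M_{p^{g₁}}, M_{p^{g₂}}, M_{p^{g₁g₂}} respectively. -/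

import Mathlib

/-- The underlying graded vector space of `M_p⁴`: in each degree a copy of `k⁴`. -/
abbrev Fat4V (k : Type*) [Field k] := ℕ →₀ (Fin 4 → k)

/-- The underlying graded vector space of a point module: in each degree a copy of `k`. -/
abbrev PtV (k : Type*) [Field k] := ℕ →₀ k

/-- The degree-`j` matrix of the right action of the generator `xᵢ` (embedded in `M₄(A)` via
`x₀ ↦ diag(x₀,x₀,x₀,x₀)`, `x₁ ↦ diag(x₁,-x₁,-x₁,x₁)`, `x₂ ↦` the antidiagonal matrix with
all antidiagonal entries `x₂`, `x₃ ↦` the antidiagonal matrix with entries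
`(x₃,-x₃,-x₃,x₃)` from top-right to bottom-left) on `M_p⁴`, via the structure constants
`m_j · xᵢ = α j i • m_{j+1}`. -/
def fat4Mat (k : Type*) [Field k] (α : ℕ → Fin 4 → k) (i : Fin 4) (j : ℕ) :
    Matrix (Fin 4) (Fin 4) k :=
  if i = 0 then α j 0 • (1 : Matrix (Fin 4) (Fin 4) k)
  else if i = 1 then α j 1 • Matrix.diagonal ![1, -1, -1, 1]
  else if i = 2 then α j 2 • !![0, 0, 0, 1; 0, 0, 1, 0; 0, 1, 0, 0; 1, 0, 0, 0]
  else α j 3 • !![0, 0, 0, 1; 0, 0, -1, 0; 0, -1, 0, 0; 1, 0, 0, 0]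

/-- The action of the generator `xᵢ` on `M_p⁴` as a `k`-linear endomorphism. -/
noncomputable def fat4Act (k : Type*) [Field k] (α : ℕ → Fin 4 → k) (i : Fin 4) :
    Fat4V k →ₗ[k] Fat4V k :=
  Finsupp.lsum k fun j => (Finsupp.lsingle (j + 1)).comp (Matrix.toLin' (fat4Mat k α i j))

/-- Sign pattern of the Klein four-group action: the point module `M_{p^g}` has structure
constants `klSgn g i * α j i`. -/
def klSgn (k : Type*) [Field k] (g : ZMod 2 × ZMod 2) : Fin 4 → k :=
  ![1, (-1) ^ g.2.val, (-1) ^ g.1.val, (-1) ^ (g.1.val + g.2.val)]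

/-- The action of `xᵢ` on the point module `M_{p^g}` (modelled on `ℕ →₀ k`). -/
noncomputable def ptAct (k : Type*) [Field k] (α : ℕ → Fin 4 → k) (g : ZMod 2 × ZMod 2)
    (i : Fin 4) : PtV k →ₗ[k] PtV k :=
  Finsupp.lsum k fun j =>
    (Finsupp.lsingle (j + 1)).comp ((klSgn k g i * α j i) • (LinearMap.id : k →ₗ[k] k))

/-- The degree-0 generators `(m₀,0,0,m₀)`, `(m₀,0,0,-m₀)`, `(0,m₀,m₀,0)`, `(0,m₀,-m₀,0)`
of the four cyclic submodules, indexed by `e, g₁, g₂, g₁g₂`. -/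
noncomputable def fat4Gen (k : Type*) [Field k] (g : ZMod 2 × ZMod 2) : Fat4V k :=
  Finsupp.single 0 <|
    if g = ((0 : ZMod 2), (0 : ZMod 2)) then ![1, 0, 0, 1]
    else if g = (1, 0) then ![1, 0, 0, -1]
    else if g = (0, 1) then ![0, 1, 1, 0]
    else ![0, 1, -1, 0]

/-!
Each of the four matrices defining the action is a scalar multiple of a constant signed
permutation matrix, and these four constant matrices have the common eigenvectors
`(1,0,0,1)`, `(1,0,0,-1)`, `(0,1,1,0)`, `(0,1,-1,0)`, with eigenvalues the sign patterns
`klSgn g`. Placing such an eigenvector in every degree therefore embeds the point module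
`M_{p^g}` into `M_p⁴`, and since the four eigenvectors form a basis of `k⁴` when `2 ≠ 0`,
the four embeddings split `M_p⁴` degree by degree. Each image is generated by its degree-0
element because in every degree some `α j i` is nonzero, so some generator moves the
eigenvector up one degree up to a unit.
-/

open Finsupp LinearMap
open scoped Matrix

section GradedShift

variable {R M N : Type*} [CommSemiring R] [AddCommMonoid M] [Module R M] [AddCommMonoid N]
  [Module R N]

/-- `fat4Act` and `ptAct` are, definitionally, of this form. -/
noncomputable def gradedShift (A : ℕ → M →ₗ[R] N) : (ℕ →₀ M) →ₗ[R] (ℕ →₀ N) :=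
  Finsupp.lsum R fun j => (Finsupp.lsingle (j + 1)).comp (A j)

@[simp]
theorem gradedShift_single (A : ℕ → M →ₗ[R] N) (j : ℕ) (v : M) :
    gradedShift A (single j v) = single (j + 1) (A j v) := by
  simp [gradedShift]

theorem mapRange_linearMap_comp_gradedShift {A : ℕ → M →ₗ[R] M} {B : ℕ → N →ₗ[R] N}
    (f : M →ₗ[R] N) (hf : ∀ j, f ∘ₗ A j = B j ∘ₗ f) :
    mapRange.linearMap f ∘ₗ gradedShift A = gradedShift B ∘ₗ mapRange.linearMap f :=
  lhom_ext fun j v => by simpa using congr(single (j + 1) $(LinearMap.congr_fun (hf j) v))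

theorem mapRange_toSpanSingleton_gradedShift {A : ℕ → M →ₗ[R] M} {c : ℕ → R} {v : M}
    (hv : ∀ j, A j v = c j • v) (w : ℕ →₀ R) :
    mapRange.linearMap (toSpanSingleton R M v)
        (gradedShift (fun j => c j • (LinearMap.id : R →ₗ[R] R)) w) =
      gradedShift A (mapRange.linearMap (toSpanSingleton R M v) w) := by
  refine LinearMap.congr_fun (mapRange_linearMap_comp_gradedShift (B := A) _ fun j => ?_) w
  ext
  simp [hv]

end GradedShift

section CommonEigenvector

variable {K V ι : Type*} [Field K] [AddCommGroup V] [Module K V] {A : ι → ℕ → V →ₗ[K] V}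
  {c : ι → ℕ → K} {v : V} {N : Submodule K (ℕ →₀ V)}

theorem single_mem_of_gradedShift_mem (hv : ∀ i j, A i j v = c i j • v)
    (hc : ∀ j, ∃ i, c i j ≠ 0) (hN : ∀ i, ∀ x ∈ N, gradedShift (A i) x ∈ N)
    (h0 : single 0 v ∈ N) (n : ℕ) : single n v ∈ N := by
  induction n with
  | zero => exact h0
  | succ n ih =>
    obtain ⟨i, hi⟩ := hc n
    have h := N.smul_mem (c i n)⁻¹ (hN i _ ih)
    rwa [gradedShift_single, hv, ← smul_single, smul_smul, inv_mul_cancel₀ hi, one_smul] at h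

theorem range_mapRange_toSpanSingleton_le (hv : ∀ i j, A i j v = c i j • v)
    (hc : ∀ j, ∃ i, c i j ≠ 0) (hN : ∀ i, ∀ x ∈ N, gradedShift (A i) x ∈ N)
    (h0 : single 0 v ∈ N) : range (mapRange.linearMap (toSpanSingleton K V v)) ≤ N := by
  rintro _ ⟨w, rfl⟩
  induction w using Finsupp.induction_linear with
  | zero => simp
  | add w w' hw hw' => simpa only [map_add] using N.add_mem hw hw'
  | single n a =>
    simpa [← smul_single] using N.smul_mem a (single_mem_of_gradedShift_mem hv hc hN h0 n)

end CommonEigenvector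

theorem bijective_sum_mapRange_toSpanSingleton {ι α R V : Type*} [Fintype ι] [Semiring R]
    [AddCommMonoid V] [Module R V] (b : Module.Basis ι R V) :
    Function.Bijective fun w : ι → (α →₀ R) =>
      ∑ i, mapRange.linearMap (toSpanSingleton R V (b i)) (w i) := by
  have eval (w : ι → (α →₀ R)) (a : α) :
      (∑ i, mapRange.linearMap (toSpanSingleton R V (b i)) (w i)) a =
        b.equivFun.symm fun i => w i a := by
    simp [Finsupp.finsetSum_apply, Module.Basis.equivFun_symm_apply]
  refine ⟨fun w w' h => ?_, fun v => ⟨fun i => mapRange.linearMap (b.coord i) v, ?_⟩⟩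
  · funext i
    ext a
    have := b.equivFun.symm.injective
      ((eval w a).symm.trans ((DFunLike.congr_fun h a).trans (eval w' a)))
    exact congr_fun this i
  · ext a
    simp [Module.Basis.sum_repr]

theorem sum_zmod_two_prod {M : Type*} [AddCommMonoid M] (f : ZMod 2 × ZMod 2 → M) :
    ∑ g, f g = f (0, 0) + f (0, 1) + f (1, 0) + f (1, 1) := by
  simp only [Fintype.sum_prod_type, show ∀ h : ZMod 2 → M, ∑ a, h a = h 0 + h 1 from
    fun h => Fin.sum_univ_two h, add_assoc]

def fat4Vec (k : Type*) [Field k] (g : ZMod 2 × ZMod 2) : Fin 4 → k :=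
  if g = ((0 : ZMod 2), (0 : ZMod 2)) then ![1, 0, 0, 1]
  else if g = (1, 0) then ![1, 0, 0, -1]
  else if g = (0, 1) then ![0, 1, 1, 0]
  else ![0, 1, -1, 0]

section Klein

variable {k : Type*} [Field k]

theorem fat4Mat_mulVec_fat4Vec (α : ℕ → Fin 4 → k) (i : Fin 4) (j : ℕ) (g : ZMod 2 × ZMod 2) :
    fat4Mat k α i j *ᵥ fat4Vec k g = (klSgn k g i * α j i) • fat4Vec k g := by
  obtain ⟨a, b⟩ := g
  ext x
  fin_cases a <;> fin_cases b <;> fin_cases i <;> fin_cases x <;>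
    simp +decide [fat4Mat, fat4Vec, klSgn, Matrix.mulVec, dotProduct, Fin.sum_univ_four, ZMod.val]

theorem klSgn_ne_zero (g : ZMod 2 × ZMod 2) (i : Fin 4) : klSgn k g i ≠ 0 := by
  fin_cases i <;> simp [klSgn]

theorem linearIndependent_fat4Vec (h2 : (2 : k) ≠ 0) : LinearIndependent k (fat4Vec k) := by
  refine Fintype.linearIndependent_iff.mpr fun c hc => ?_
  rw [sum_zmod_two_prod] at hc
  have e0 := congr_fun hc 0
  have e1 := congr_fun hc 1
  have e2 := congr_fun hc 2
  have e3 := congr_fun hc 3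
  simp +decide only [fat4Vec, ↓reduceIte, Matrix.smul_cons, smul_eq_mul, mul_one, mul_zero,
    Matrix.smul_empty, Matrix.add_cons, Matrix.head_cons, add_zero, Matrix.tail_cons, zero_add,
    Matrix.empty_add_empty, mul_neg, Pi.add_apply, Matrix.cons_val_zero, Pi.zero_apply,
    Matrix.cons_val_one, Matrix.cons_val] at e0 e1 e2 e3
  have half : ∀ x : k, 2 * x = 0 → x = 0 := fun x hx => (mul_eq_zero.1 hx).resolve_left h2
  have c00 : c (0, 0) = 0 := half _ (by linear_combination e0 + e3)
  have c10 : c (1, 0) = 0 := half _ (by linear_combination e0 - e3)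
  have c01 : c (0, 1) = 0 := half _ (by linear_combination e1 + e2)
  have c11 : c (1, 1) = 0 := half _ (by linear_combination e1 - e2)
  rintro ⟨a, b⟩
  fin_cases a <;> fin_cases b <;> assumption

end Klein

/-- `M_p⁴`, viewed over the subalgebra of `M₄(A)` generated by the four stated
matrices, decomposes as an internal direct sum of four graded submodules, cyclic on the
degree-0 generators `(m₀,0,0,m₀)`, `(m₀,0,0,-m₀)`, `(0,m₀,m₀,0)`, `(0,m₀,-m₀,0)`, which are
isomorphic to the point modules `M_p`, `M_{p^{g₁}}`, `M_{p^{g₂}}`, `M_{p^{g₁g₂}}`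
respectively.  Formally: there are injective intertwining maps `φ g` from the model of
`M_{p^g}` into `M_p⁴` sending `m₀` to the stated generator, whose combined map is a linear
bijection (internal direct sum), and whose images are exactly the stable submodules
generated by the four generators (cyclicity). -/
theorem stmt18 {k : Type*} [Field k] (h2 : (2 : k) ≠ 0) (α : ℕ → Fin 4 → k)
    (hα : ∀ j : ℕ, ∃ i : Fin 4, α j i ≠ 0) :
    ∃ φ : (ZMod 2 × ZMod 2) → (PtV k →ₗ[k] Fat4V k),
      (∀ g, Function.Injective (φ g)) ∧
      (∀ g i w, φ g (ptAct k α g i w) = fat4Act k α i (φ g w)) ∧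
      (∀ g, φ g (Finsupp.single 0 1) = fat4Gen k g) ∧
      Function.Bijective (fun w : (ZMod 2 × ZMod 2) → PtV k => ∑ g, φ g (w g)) ∧
      (∀ g, ∀ N : Submodule k (Fat4V k),
        (∀ (i : Fin 4), ∀ v ∈ N, fat4Act k α i v ∈ N) →
        fat4Gen k g ∈ N → LinearMap.range (φ g) ≤ N) := by
  have hind := linearIndependent_fat4Vec h2
  have eigen (g i) (j : ℕ) :
      Matrix.toLin' (fat4Mat k α i j) (fat4Vec k g) = (klSgn k g i * α j i) • fat4Vec k g := by
    rw [Matrix.toLin'_apply, fat4Mat_mulVec_fat4Vec]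
  refine ⟨fun g => mapRange.linearMap (toSpanSingleton k _ (fat4Vec k g)), fun g => ?_,
    fun g i => mapRange_toSpanSingleton_gradedShift (eigen g i), fun g => ?_, ?_,
    fun g N hN hgen => range_mapRange_toSpanSingleton_le (eigen g) (fun j => ?_) hN hgen⟩
  · exact mapRange_injective _ (map_zero _) (smul_left_injective k (hind.ne_zero g))
  · simp [fat4Gen, fat4Vec]
  · simpa using bijective_sum_mapRange_toSpanSingleton (α := ℕ)
      (basisOfLinearIndependentOfCardEqFinrank hind (by simp))
  · obtain ⟨i, hi⟩ := hα j
    exact ⟨i, mul_ne_zero (klSgn_ne_zero g i) hi⟩
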